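/- arXiv:2601.14882 — 2 statements merged into one kernel-verified Lean document; each statement's English description precedes it below -/
import Mathlib

section
/- For any scalar s ∈ ℝ, vectors Θ, Φ ∈ ℝⁿ with ‖Θ‖ ≤ ϑ for some ϑ ≥ 0, and any τ > 0, the inequality s·⟨Θ, Φ⟩ ≤ ϑ · (s²·‖Φ‖²)/√(s²·‖Φ‖² + τ²) + τ·ϑ holds. -/
open RealInnerProductSpace

theorem stmt_1 (n : ℕ) (s τ ϑ : ℝ) (hτ : 0 < τ) (hϑ : 0 ≤ ϑ)
    (Θ Φ : EuclideanSpace ℝ (Fin n)) (hΘ : ‖Θ‖ ≤ ϑ) :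
    s * ⟪Θ, Φ⟫ ≤
      ϑ * (s ^ 2 * ‖Φ‖ ^ 2) / Real.sqrt (s ^ 2 * ‖Φ‖ ^ 2 + τ ^ 2) + τ * ϑ := by
  set a : ℝ := |s| * ‖Φ‖ with ha
  have ha0 : 0 ≤ a := mul_nonneg (abs_nonneg s) (norm_nonneg _)
  have hsq : s ^ 2 * ‖Φ‖ ^ 2 = a ^ 2 := by
    rw [ha, mul_pow, sq_abs]
  have h1 : s * ⟪Θ, Φ⟫ ≤ ϑ * a := by
    calc s * ⟪Θ, Φ⟫ ≤ |s * ⟪Θ, Φ⟫| := le_abs_self _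
      _ = |s| * |⟪Θ, Φ⟫| := abs_mul _ _
      _ ≤ |s| * (‖Θ‖ * ‖Φ‖) := by
          gcongr
          exact abs_real_inner_le_norm Θ Φ
      _ ≤ |s| * (ϑ * ‖Φ‖) := by gcongr
      _ = ϑ * a := by ring
  have hr0 : (0:ℝ) < a ^ 2 + τ ^ 2 := by positivity
  rw [hsq]
  set r : ℝ := Real.sqrt (a ^ 2 + τ ^ 2) with hrdef
  have hrpos : 0 < r := Real.sqrt_pos.mpr hr0
  have hrsq : r ^ 2 = a ^ 2 + τ ^ 2 := Real.sq_sqrt hr0.le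
  have har : a ≤ r := by nlinarith
  have hrat : r ≤ a + τ := by nlinarith
  have key : a ≤ a ^ 2 / r + τ := by
    rw [div_add' _ _ _ hrpos.ne', le_div_iff₀ hrpos]
    nlinarith
  calc s * ⟪Θ, Φ⟫ ≤ ϑ * a := h1
    _ ≤ ϑ * (a ^ 2 / r + τ) := by gcongr
    _ = ϑ * a ^ 2 / r + τ * ϑ := by ring
end

section
/- Let c > c̄ > 0, d ≥ 0, t₀ ≥ 0, and let V : [t₀, ∞) → ℝ satisfy V' (t) ≤ −c·V(t) + u(t) + d where u(t) ≥ 0. Let r solve r' = −c̄·r + ū(t) + d with r(t₀) = r₀ > 0 and ū(t) ≥ u(t). Then V(t) ≤ r(t) + D(t₀, t) for all t ≥ t₀, where D(t₀, t) = max{0, e^{−c(t−t₀)}V(t₀) − e^{−c̄(t−t₀)}r₀}. -/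
/-!
Fix `t ≥ t₀` and put `K = exp ((c - cbar) t)`. For `s ∈ [t₀, t]` we have `exp (c s) ≤ K exp (cbar s)`,
so the weighted difference `ψ s = exp (c s) V s - K exp (cbar s) r s` satisfies
`ψ' ≤ exp (c s) (u + d) - K exp (cbar s) (ubar + d) ≤ 0`. Hence `ψ t ≤ ψ t₀`, which after division by
`exp (c t)` says `V t - r t ≤ exp (-c (t - t₀)) V t₀ - exp (-cbar (t - t₀)) r₀`.
-/

open Real Set

lemma hasDerivAt_exp_mul_mul {f : ℝ → ℝ} {f' k x : ℝ} (hf : HasDerivAt f f' x) :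
    HasDerivAt (fun s => exp (k * s) * f s) (exp (k * x) * (f' + k * f x)) x := by
  have hexp : HasDerivAt (fun s => exp (k * s)) (exp (k * x) * k) x := by
    simpa using ((hasDerivAt_id x).const_mul k).exp
  exact (hexp.mul hf).congr_deriv (by ring)

lemma le_of_hasDerivAt_nonpos {f f' : ℝ → ℝ} {a b : ℝ} (hab : a ≤ b)
    (hf : ∀ x ∈ Icc a b, HasDerivAt f (f' x) x) (hf' : ∀ x ∈ Icc a b, f' x ≤ 0) : f b ≤ f a :=
  antitoneOn_of_hasDerivWithinAt_nonpos (convex_Icc a b)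
    (fun x hx => (hf x hx).continuousAt.continuousWithinAt)
    (fun x hx => (hf x (interior_subset hx)).hasDerivWithinAt)
    (fun x hx => hf' x (interior_subset hx)) (left_mem_Icc.2 hab) (right_mem_Icc.2 hab) hab

lemma exp_mul_le_exp_mul_exp_mul {c cbar s t : ℝ} (hc : cbar ≤ c) (hst : s ≤ t) :
    exp (c * s) ≤ exp ((c - cbar) * t) * exp (cbar * s) := by
  rw [← exp_add, exp_le_exp]
  nlinarith

theorem sub_le_exp_mul_sub_exp_mul_of_hasDerivAt {c cbar t₀ t : ℝ} {V V' r r' g h : ℝ → ℝ}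
    (hc : cbar ≤ c) (ht : t₀ ≤ t)
    (hg : ∀ s ∈ Icc t₀ t, 0 ≤ g s) (hgh : ∀ s ∈ Icc t₀ t, g s ≤ h s)
    (hV : ∀ s ∈ Icc t₀ t, HasDerivAt V (V' s) s) (hV' : ∀ s ∈ Icc t₀ t, V' s ≤ -c * V s + g s)
    (hr : ∀ s ∈ Icc t₀ t, HasDerivAt r (r' s) s)
    (hr' : ∀ s ∈ Icc t₀ t, -cbar * r s + h s ≤ r' s) :
    V t - r t ≤ exp (-c * (t - t₀)) * V t₀ - exp (-cbar * (t - t₀)) * r t₀ := by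
  set K := exp ((c - cbar) * t)
  have hψ : exp (c * t) * V t - K * (exp (cbar * t) * r t)
      ≤ exp (c * t₀) * V t₀ - K * (exp (cbar * t₀) * r t₀) := by
    refine le_of_hasDerivAt_nonpos ht (fun s hs => (hasDerivAt_exp_mul_mul (hV s hs)).sub
      ((hasDerivAt_exp_mul_mul (hr s hs)).const_mul K)) fun s hs => ?_
    have hexp := exp_mul_le_exp_mul_exp_mul hc hs.2
    have hKpos : 0 ≤ K * exp (cbar * s) := by positivity
    calc exp (c * s) * (V' s + c * V s) - K * (exp (cbar * s) * (r' s + cbar * r s))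
        ≤ exp (c * s) * g s - K * exp (cbar * s) * h s := by
          gcongr ?_ - ?_
          · exact mul_le_mul_of_nonneg_left (by linarith [hV' s hs]) (exp_pos _).le
          · rw [← mul_assoc]; exact mul_le_mul_of_nonneg_left (by linarith [hr' s hs]) hKpos
      _ ≤ K * exp (cbar * s) * g s - K * exp (cbar * s) * h s := by
          gcongr; exact hg s hs
      _ ≤ 0 := sub_nonpos.2 (mul_le_mul_of_nonneg_left (hgh s hs) hKpos)
  have e₁ : exp (c * t) * exp (-c * (t - t₀)) = exp (c * t₀) := by rw [← exp_add]; ring_nf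
  have e₂ : exp (c * t) * exp (-cbar * (t - t₀)) = K * exp (cbar * t₀) := by
    rw [← exp_add, ← exp_add]; ring_nf
  have e₃ : K * exp (cbar * t) = exp (c * t) := by rw [← exp_add]; ring_nf
  refine le_of_mul_le_mul_left ?_ (exp_pos (c * t))
  linear_combination hψ + r t * e₃ - V t₀ * e₁ + r t₀ * e₂

theorem stmt_11_general (c cbar d t₀ r₀ : ℝ) (hc : cbar < c)
    (hd : 0 ≤ d)
    (V V' u ubar r : ℝ → ℝ)
    (hu : ∀ t, 0 ≤ u t) (hdom : ∀ t, u t ≤ ubar t)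
    (hV : ∀ t, t₀ ≤ t → HasDerivAt V (V' t) t)
    (hV' : ∀ t, t₀ ≤ t → V' t ≤ -c * V t + u t + d)
    (hr : ∀ t, t₀ ≤ t → HasDerivAt r (-cbar * r t + ubar t + d) t)
    (hr0 : r t₀ = r₀) :
    ∀ t, t₀ ≤ t →
      V t ≤ r t +
        max 0 (Real.exp (-c * (t - t₀)) * V t₀ - Real.exp (-cbar * (t - t₀)) * r₀) := by
  intro t ht
  have hcmp := sub_le_exp_mul_sub_exp_mul_of_hasDerivAt (g := fun s => u s + d)
    (h := fun s => ubar s + d) hc.le ht (fun s _ => by linarith [hu s])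
    (fun s _ => by linarith [hdom s]) (fun s hs => hV s hs.1)
    (fun s hs => by linarith [hV' s hs.1]) (fun s hs => hr s hs.1) (fun s _ => by linarith)
  rw [hr0] at hcmp
  linarith [le_max_right 0 (exp (-c * (t - t₀)) * V t₀ - exp (-cbar * (t - t₀)) * r₀)]

theorem stmt_11 (c cbar d t₀ r₀ : ℝ) (hc : cbar < c) (hcbar : 0 < cbar)
    (hd : 0 ≤ d) (hr₀ : 0 < r₀)
    (V V' u ubar r : ℝ → ℝ)
    (hu_cont : Continuous u) (hubar_cont : Continuous ubar)
    (hu : ∀ t, 0 ≤ u t) (hdom : ∀ t, u t ≤ ubar t)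
    (hV : ∀ t, t₀ ≤ t → HasDerivAt V (V' t) t)
    (hV' : ∀ t, t₀ ≤ t → V' t ≤ -c * V t + u t + d)
    (hr : ∀ t, t₀ ≤ t → HasDerivAt r (-cbar * r t + ubar t + d) t)
    (hr0 : r t₀ = r₀) :
    ∀ t, t₀ ≤ t →
      V t ≤ r t +
        max 0 (Real.exp (-c * (t - t₀)) * V t₀ - Real.exp (-cbar * (t - t₀)) * r₀) :=
  stmt_11_general c cbar d t₀ r₀ hc hd V V' u ubar r hu hdom hV hV' hr hr0
end
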